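/- arXiv:2107.02266 — 5 statements merged into one kernel-verified Lean document; each statement's English description precedes it below -/
import Mathlib

section
/- With the recursive weights w_i = (I − W_{i−1}Z_{i−1}) z_i / (γ/2 + ‖z_i‖²) and Δ_i := I − ∑_{j=1}^i w_j z_jᵀ, one has for each i the identity Δ_i Δ_iᵀ = Δ_{i−1} Δ_{i−1}ᵀ − (γ + ‖z_i‖²) w_i w_iᵀ. -/
open Matrix Finset

lemma mul_vecMulVec' {d : ℕ} (M : Matrix (Fin d) (Fin d) ℝ) (a b : Fin d → ℝ) :
    M * vecMulVec a b = vecMulVec (M *ᵥ a) b := by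
  ext i j
  simp [Matrix.mul_apply, vecMulVec_apply, mulVec, dotProduct, Finset.sum_mul, mul_assoc]

lemma vecMulVec_mul' {d : ℕ} (M : Matrix (Fin d) (Fin d) ℝ) (a b : Fin d → ℝ) :
    vecMulVec a b * M = vecMulVec a (b ᵥ* M) := by
  ext i j
  simp [Matrix.mul_apply, vecMulVec_apply, vecMul, dotProduct, Finset.mul_sum, mul_assoc]

lemma vecMulVec_transpose' {d : ℕ} (a b : Fin d → ℝ) :
    (vecMulVec a b)ᵀ = vecMulVec b a := by
  ext i j; simp [vecMulVec_apply, mul_comm]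

lemma vecMulVec_mul_vecMulVec' {d : ℕ} (a b c e : Fin d → ℝ) :
    vecMulVec a b * vecMulVec c e = (b ⬝ᵥ c) • vecMulVec a e := by
  ext i j
  simp [Matrix.mul_apply, vecMulVec_apply, dotProduct, Finset.sum_mul, Finset.mul_sum]
  congr 1; ext k; ring

lemma vecMulVec_smul_left' {d : ℕ} (r : ℝ) (a b : Fin d → ℝ) :
    vecMulVec (r • a) b = r • vecMulVec a b := by
  ext i j; simp [vecMulVec_apply, mul_assoc]

/-- with `Δ_k = I − ∑_{j<k} w_j z_jᵀ` and the recursive weights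
`w_i = Δ_i z_i / (γ/2 + ‖z_i‖²)`, one has
`Δ_{i+1} Δ_{i+1}ᵀ = Δ_i Δ_iᵀ − (γ + ‖z_i‖²) w_i w_iᵀ`. -/
theorem debias_recursion_identity (d : ℕ) (γ : ℝ) (hγ : 0 < γ)
    (z w : ℕ → Fin d → ℝ)
    (Δ : ℕ → Matrix (Fin d) (Fin d) ℝ)
    (hΔ : ∀ k, Δ k = (1 : Matrix (Fin d) (Fin d) ℝ)
      - ∑ j ∈ Finset.range k, vecMulVec (w j) (z j))
    (hw : ∀ i, w i = (γ / 2 + z i ⬝ᵥ z i)⁻¹ • (Δ i *ᵥ z i)) :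
    ∀ i, Δ (i + 1) * (Δ (i + 1))ᵀ
      = Δ i * (Δ i)ᵀ - (γ + z i ⬝ᵥ z i) • vecMulVec (w i) (w i) := by
  intro i
  set q : ℝ := z i ⬝ᵥ z i with hq
  have hq0 : 0 ≤ q := by
    simp only [hq, dotProduct]
    exact Finset.sum_nonneg fun k _ => mul_self_nonneg _
  have hc : γ / 2 + q ≠ 0 := by positivity
  have hΔz : Δ i *ᵥ z i = (γ / 2 + q) • w i := by
    rw [hw i, smul_smul, mul_inv_cancel₀ hc, one_smul]
  have hstep : Δ (i + 1) = Δ i - vecMulVec (w i) (z i) := by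
    rw [hΔ, hΔ, Finset.sum_range_succ]; abel
  have hzΔ : z i ᵥ* (Δ i)ᵀ = (γ / 2 + q) • w i := by
    rw [Matrix.vecMul_transpose, hΔz]
  rw [hstep, Matrix.transpose_sub, Matrix.sub_mul, Matrix.mul_sub, Matrix.mul_sub,
    vecMulVec_transpose', mul_vecMulVec', vecMulVec_mul', vecMulVec_mul_vecMulVec',
    hΔz, hzΔ, vecMulVec_smul_left']
  have hsmul : vecMulVec (w i) ((γ / 2 + q) • w i) = (γ / 2 + q) • vecMulVec (w i) (w i) := by
    ext a b; simp [vecMulVec_apply]; ring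
  rw [hsmul]
  have : (γ + q) = (γ / 2 + q) + ((γ / 2 + q) - q) := by ring
  rw [this]
  generalize vecMulVec (w i) (w i) = W
  generalize Δ i * (Δ i)ᵀ = A
  rw [← hq]
  simp only [add_smul, sub_smul]
  abel
end

section
/- With the recursive weights above, summing the recursion yields the matrix identity I − γ ∑_{i=1}^n w_i w_iᵀ = ∑_{i=1}^n ‖z_i‖² w_i w_iᵀ + (I − W_n Z_n)(I − W_n Z_n)ᵀ. In particular, γ ∑_{i=1}^n w_i w_iᵀ ⪯ I, and hence γ ∑_{i=1}^n ‖w_i‖² ≤ d. -/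
open Matrix Finset

section Aux

variable {d : ℕ}

private lemma vmv_trans (u v : Fin d → ℝ) : (vecMulVec u v)ᵀ = vecMulVec v u := by
  ext i j; simp [vecMulVec_apply, mul_comm]

private lemma mul_vmv (A : Matrix (Fin d) (Fin d) ℝ) (u v : Fin d → ℝ) :
    A * vecMulVec u v = vecMulVec (A *ᵥ u) v := by
  ext i j
  simp only [Matrix.mul_apply, vecMulVec_apply, mulVec, dotProduct, Finset.sum_mul]
  exact Finset.sum_congr rfl fun k _ => by ring

private lemma vmv_mul (A : Matrix (Fin d) (Fin d) ℝ) (u v : Fin d → ℝ) :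
    vecMulVec u v * A = vecMulVec u (Aᵀ *ᵥ v) := by
  ext i j
  simp only [Matrix.mul_apply, vecMulVec_apply, mulVec, dotProduct, Finset.mul_sum,
    transpose_apply]
  exact Finset.sum_congr rfl fun k _ => by ring

private lemma vmv_mul_vmv (u v v' u' : Fin d → ℝ) :
    vecMulVec u v * vecMulVec v' u' = (v ⬝ᵥ v') • vecMulVec u u' := by
  ext i j
  simp only [Matrix.mul_apply, vecMulVec_apply, Matrix.smul_apply, smul_eq_mul, dotProduct,
    Finset.sum_mul]
  exact Finset.sum_congr rfl fun k _ => by ring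

private lemma smul_vmv (c : ℝ) (u v : Fin d → ℝ) :
    vecMulVec (c • u) v = c • vecMulVec u v := by
  ext i j; simp [vecMulVec_apply, mul_assoc]

private lemma vmv_smul (c : ℝ) (u v : Fin d → ℝ) :
    vecMulVec u (c • v) = c • vecMulVec u v := by
  ext i j; simp [vecMulVec_apply]; ring

private lemma vmv_self_psd (u : Fin d → ℝ) : (vecMulVec u u).PosSemidef := by
  refine .of_dotProduct_mulVec_nonneg (by ext i j; simp [conjTranspose_apply, vecMulVec_apply, mul_comm]) fun x => ?_
  have h : vecMulVec u u *ᵥ x = (u ⬝ᵥ x) • u := by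
    ext i
    simp only [mulVec, dotProduct, vecMulVec_apply, Pi.smul_apply, smul_eq_mul]
    rw [Finset.sum_mul]
    exact Finset.sum_congr rfl fun k _ => by ring
  rw [h]
  simp only [star_trivial, dotProduct_smul, smul_eq_mul]
  have : x ⬝ᵥ u = u ⬝ᵥ x := dotProduct_comm _ _
  rw [this]
  exact mul_self_nonneg _

private lemma psd_smul {M : Matrix (Fin d) (Fin d) ℝ} (h : M.PosSemidef) {c : ℝ}
    (hc : 0 ≤ c) : (c • M).PosSemidef := by
  refine .of_dotProduct_mulVec_nonneg ?_ fun x => ?_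
  · have := h.1
    ext i j
    simp only [conjTranspose_apply, Matrix.smul_apply, star_trivial, smul_eq_mul]
    have := congrFun (congrFun h.1 i) j
    simpa [conjTranspose_apply] using congrArg (c * ·) this
  · rw [smul_mulVec, dotProduct_smul, smul_eq_mul]
    exact mul_nonneg hc (h.dotProduct_mulVec_nonneg x)

private lemma psd_trace_nonneg {M : Matrix (Fin d) (Fin d) ℝ} (h : M.PosSemidef) :
    0 ≤ M.trace := by
  rw [Matrix.trace]
  refine Finset.sum_nonneg fun i _ => ?_
  have h2 := h.dotProduct_mulVec_nonneg (Pi.single i 1)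
  simpa [dotProduct, mulVec, Pi.single_apply, Finset.sum_ite_eq, Finset.sum_ite_eq'] using h2

private lemma step_identity (γ : ℝ) (hγ : 0 < γ) (Δ : Matrix (Fin d) (Fin d) ℝ)
    (z w : Fin d → ℝ) (hw : w = (γ / 2 + z ⬝ᵥ z)⁻¹ • (Δ *ᵥ z)) :
    (Δ - vecMulVec w z) * (Δ - vecMulVec w z)ᵀ
      = Δ * Δᵀ - γ • vecMulVec w w - (z ⬝ᵥ z) • vecMulVec w w := by
  have hz : 0 ≤ z ⬝ᵥ z := by
    simpa [dotProduct] using Finset.sum_nonneg fun k _ => mul_self_nonneg (z k)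
  have hc : γ / 2 + z ⬝ᵥ z ≠ 0 := by positivity
  have hΔz : Δ *ᵥ z = (γ / 2 + z ⬝ᵥ z) • w := by
    rw [hw, smul_smul, mul_inv_cancel₀ hc, one_smul]
  rw [transpose_sub, vmv_trans, sub_mul, mul_sub, mul_sub, mul_vmv, vmv_mul,
    transpose_transpose, hΔz, smul_vmv, vmv_smul, vmv_mul_vmv]
  module

end Aux

/-- summing the recursion yields
`I − γ ∑ w_i w_iᵀ = ∑ ‖z_i‖² w_i w_iᵀ + Δ_n Δ_nᵀ`; in particular
`γ ∑ w_i w_iᵀ ⪯ I` and `γ ∑ ‖w_i‖² ≤ d`. -/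
theorem debias_weight_sum_identity (d n : ℕ) (γ : ℝ) (hγ : 0 < γ)
    (z w : ℕ → Fin d → ℝ)
    (Δ : ℕ → Matrix (Fin d) (Fin d) ℝ)
    (hΔ : ∀ k, Δ k = (1 : Matrix (Fin d) (Fin d) ℝ)
      - ∑ j ∈ Finset.range k, vecMulVec (w j) (z j))
    (hw : ∀ i, w i = (γ / 2 + z i ⬝ᵥ z i)⁻¹ • (Δ i *ᵥ z i)) :
    (1 : Matrix (Fin d) (Fin d) ℝ)
        - γ • ∑ i ∈ Finset.range n, vecMulVec (w i) (w i)
      = (∑ i ∈ Finset.range n, (z i ⬝ᵥ z i) • vecMulVec (w i) (w i))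
        + Δ n * (Δ n)ᵀ
    ∧ ((1 : Matrix (Fin d) (Fin d) ℝ)
        - γ • ∑ i ∈ Finset.range n, vecMulVec (w i) (w i)).PosSemidef
    ∧ γ * ∑ i ∈ Finset.range n, (w i ⬝ᵥ w i) ≤ (d : ℝ) := by
  have key : ∀ m : ℕ, (1 : Matrix (Fin d) (Fin d) ℝ)
      - γ • ∑ i ∈ Finset.range m, vecMulVec (w i) (w i)
      = (∑ i ∈ Finset.range m, (z i ⬝ᵥ z i) • vecMulVec (w i) (w i))
        + Δ m * (Δ m)ᵀ := by
    intro m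
    induction m with
    | zero => simp [hΔ 0]
    | succ k ih =>
      have hΔsucc : Δ (k + 1) = Δ k - vecMulVec (w k) (z k) := by
        rw [hΔ (k + 1), hΔ k, Finset.sum_range_succ]; abel
      rw [Finset.sum_range_succ, Finset.sum_range_succ, hΔsucc,
        step_identity γ hγ (Δ k) (z k) (w k) (hw k), smul_add]
      have : (1 : Matrix (Fin d) (Fin d) ℝ)
          - (γ • ∑ i ∈ Finset.range k, vecMulVec (w i) (w i)
            + γ • vecMulVec (w k) (w k))
          = ((1 : Matrix (Fin d) (Fin d) ℝ)
            - γ • ∑ i ∈ Finset.range k, vecMulVec (w i) (w i))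
            - γ • vecMulVec (w k) (w k) := by abel
      rw [this, ih]; abel
  refine ⟨key n, ?_, ?_⟩
  · rw [key n]
    refine Matrix.PosSemidef.add ?_ ?_
    · refine Finset.sum_induction _ _ (fun a b ha hb => ha.add hb) .zero fun i _ => ?_
      have hz : 0 ≤ z i ⬝ᵥ z i := by
        simpa [dotProduct] using Finset.sum_nonneg fun k _ => mul_self_nonneg (z i k)
      exact psd_smul (vmv_self_psd (w i)) hz
    · have := Matrix.posSemidef_self_mul_conjTranspose (Δ n)
      simpa [conjTranspose_eq_transpose_of_trivial] using this
  · have hpsd : ((1 : Matrix (Fin d) (Fin d) ℝ)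
        - γ • ∑ i ∈ Finset.range n, vecMulVec (w i) (w i)).PosSemidef := by
      rw [key n]
      refine Matrix.PosSemidef.add ?_ ?_
      · refine Finset.sum_induction _ _ (fun a b ha hb => ha.add hb) .zero fun i _ => ?_
        have hz : 0 ≤ z i ⬝ᵥ z i := by
          simpa [dotProduct] using Finset.sum_nonneg fun k _ => mul_self_nonneg (z i k)
        exact psd_smul (vmv_self_psd (w i)) hz
      · have := Matrix.posSemidef_self_mul_conjTranspose (Δ n)
        simpa [conjTranspose_eq_transpose_of_trivial] using this
    have htr := psd_trace_nonneg hpsd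
    have htrace : ((1 : Matrix (Fin d) (Fin d) ℝ)
        - γ • ∑ i ∈ Finset.range n, vecMulVec (w i) (w i)).trace
        = (d : ℝ) - γ * ∑ i ∈ Finset.range n, (w i ⬝ᵥ w i) := by
      rw [trace_sub, trace_one, trace_smul, trace_sum]
      have : ∀ i, (vecMulVec (w i) (w i)).trace = w i ⬝ᵥ w i := by
        intro i; simp [Matrix.trace, Matrix.diag, vecMulVec_apply, dotProduct]
      simp [this, smul_eq_mul, Fintype.card_fin]
    rw [htrace] at htr
    linarith
end

section
/- With the recursive weights above, ‖w_i‖² ≤ ‖I − W_{i−1}Z_{i−1}‖_op² · ‖z_i‖² / (γ/2 + ‖z_i‖²)², and moreover ‖I − W_i Z_i‖_op ≤ ‖I − W_{i−1}Z_{i−1}‖_op ≤ 1 for all i; consequently γ ‖w_i‖² ≤ 4 ‖z_i‖² / γ for every i. -/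
open Matrix Finset

/-- The ℓ²-operator norm of a real square matrix. -/
noncomputable def matOpNorm {d : ℕ} (M : Matrix (Fin d) (Fin d) ℝ) : ℝ :=
  ‖(Matrix.toEuclideanCLM (𝕜 := ℝ) M :
      EuclideanSpace ℝ (Fin d) →L[ℝ] EuclideanSpace ℝ (Fin d))‖

lemma dot_self_eq_norm_sq {d : ℕ} (v : Fin d → ℝ) :
    v ⬝ᵥ v = ‖(WithLp.equiv 2 (Fin d → ℝ)).symm v‖ ^ 2 := by
  rw [EuclideanSpace.norm_eq, Real.sq_sqrt (by positivity)]
  simp [dotProduct, sq]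

lemma dot_self_nonneg' {d : ℕ} (v : Fin d → ℝ) : 0 ≤ v ⬝ᵥ v := by
  rw [dot_self_eq_norm_sq]; positivity

lemma mulVec_norm_le {d : ℕ} (M : Matrix (Fin d) (Fin d) ℝ) (v : Fin d → ℝ) :
    ‖(WithLp.equiv 2 (Fin d → ℝ)).symm (M *ᵥ v)‖
      ≤ matOpNorm M * ‖(WithLp.equiv 2 (Fin d → ℝ)).symm v‖ := by
  have := (Matrix.toEuclideanCLM (𝕜 := ℝ) M).le_opNorm ((WithLp.equiv 2 (Fin d → ℝ)).symm v)
  exact this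

/-- dotProduct bound from op norm. -/
lemma mulVec_dot_le {d : ℕ} (M : Matrix (Fin d) (Fin d) ℝ) (v : Fin d → ℝ) :
    (M *ᵥ v) ⬝ᵥ (M *ᵥ v) ≤ matOpNorm M ^ 2 * (v ⬝ᵥ v) := by
  rw [dot_self_eq_norm_sq, dot_self_eq_norm_sq]
  calc ‖(WithLp.equiv 2 (Fin d → ℝ)).symm (M *ᵥ v)‖ ^ 2
      ≤ (matOpNorm M * ‖(WithLp.equiv 2 (Fin d → ℝ)).symm v‖) ^ 2 := by
        apply pow_le_pow_left₀ (norm_nonneg _) (mulVec_norm_le M v)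
    _ = _ := by ring

lemma matOpNorm_mul_le {d : ℕ} (M N : Matrix (Fin d) (Fin d) ℝ) :
    matOpNorm (M * N) ≤ matOpNorm M * matOpNorm N := by
  unfold matOpNorm
  rw [_root_.map_mul]
  exact ContinuousLinearMap.opNorm_comp_le _ _

lemma matOpNorm_one_le {d : ℕ} : matOpNorm (1 : Matrix (Fin d) (Fin d) ℝ) ≤ 1 := by
  unfold matOpNorm
  rw [_root_.map_one]
  exact ContinuousLinearMap.norm_id_le

/-- The contraction `1 - c⁻¹ • z zᵀ` has operator norm at most 1 when `c ≥ ‖z‖²`. -/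
lemma contraction_opNorm_le {d : ℕ} (z : Fin d → ℝ) (c : ℝ) (hc : 0 < c)
    (hzc : z ⬝ᵥ z ≤ c) :
    matOpNorm ((1 : Matrix (Fin d) (Fin d) ℝ) - c⁻¹ • vecMulVec z z) ≤ 1 := by
  unfold matOpNorm
  apply ContinuousLinearMap.opNorm_le_bound _ zero_le_one
  intro x
  rw [one_mul]
  set v : Fin d → ℝ := WithLp.equiv 2 (Fin d → ℝ) x with hv
  have hx : x = (WithLp.equiv 2 (Fin d → ℝ)).symm v := rfl
  rw [hx]
  change ‖(WithLp.equiv 2 (Fin d → ℝ)).symm (((1 : Matrix (Fin d) (Fin d) ℝ) - c⁻¹ • vecMulVec z z) *ᵥ v)‖ ≤ ‖(WithLp.equiv 2 (Fin d → ℝ)).symm v‖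
  have key : (((1 : Matrix (Fin d) (Fin d) ℝ) - c⁻¹ • vecMulVec z z) *ᵥ v) ⬝ᵥ
      (((1 : Matrix (Fin d) (Fin d) ℝ) - c⁻¹ • vecMulVec z z) *ᵥ v) ≤ v ⬝ᵥ v := by
    have hvv : vecMulVec z z *ᵥ v = (z ⬝ᵥ v) • z := by
      ext i
      simp only [mulVec, vecMulVec, dotProduct, Matrix.of_apply, Pi.smul_apply, smul_eq_mul]
      rw [Finset.sum_congr rfl (fun j _ => mul_assoc (z i) (z j) (v j)), ← Finset.mul_sum]
      ring
    have hmv : ((1 : Matrix (Fin d) (Fin d) ℝ) - c⁻¹ • vecMulVec z z) *ᵥ v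
        = v - (c⁻¹ * (z ⬝ᵥ v)) • z := by
      rw [Matrix.sub_mulVec, Matrix.one_mulVec, Matrix.smul_mulVec, hvv]
      ext i; simp [mul_smul]
    rw [hmv]
    have hs : z ⬝ᵥ v = v ⬝ᵥ z := dotProduct_comm z v
    simp only [sub_dotProduct, dotProduct_sub, smul_dotProduct, dotProduct_smul,
      smul_eq_mul]
    rw [← hs]
    have hzz : 0 ≤ z ⬝ᵥ z := dot_self_nonneg' z
    have hsq : 0 ≤ (z ⬝ᵥ v) ^ 2 := sq_nonneg _
    have hcinv : 0 < c⁻¹ := inv_pos.mpr hc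
    have h1 : c⁻¹ * (z ⬝ᵥ z) ≤ 1 := by
      have := mul_le_mul_of_nonneg_left hzc hcinv.le
      rwa [inv_mul_cancel₀ hc.ne'] at this
    have h2 : (0:ℝ) ≤ 2 - c⁻¹ * (z ⬝ᵥ z) := by linarith
    nlinarith [mul_nonneg (mul_nonneg hcinv.le (mul_self_nonneg (z ⬝ᵥ v))) h2]
  have h1 := dot_self_eq_norm_sq (((1 : Matrix (Fin d) (Fin d) ℝ) - c⁻¹ • vecMulVec z z) *ᵥ v)
  have h2 := dot_self_eq_norm_sq v
  rw [h1, h2] at key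
  exact (pow_le_pow_iff_left₀ (norm_nonneg _) (norm_nonneg _) two_ne_zero).mp key

lemma smul_vecMulVec' {d : ℕ} (a : ℝ) (u v : Fin d → ℝ) :
    vecMulVec (a • u) v = a • vecMulVec u v := by
  ext i j; simp [vecMulVec, mul_assoc]

/-- `(M z) zᵀ = M (z zᵀ)`. -/
lemma vecMulVec_mulVec_left {d : ℕ} (M : Matrix (Fin d) (Fin d) ℝ) (u v : Fin d → ℝ) :
    vecMulVec (M *ᵥ u) v = M * vecMulVec u v := by
  ext i j
  simp only [vecMulVec, mulVec, dotProduct, Matrix.of_apply, Matrix.mul_apply]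
  rw [Finset.sum_mul]
  exact Finset.sum_congr rfl fun k _ => mul_assoc _ _ _

/-- `‖w_i‖² ≤ ‖Δ_i‖_op² ‖z_i‖²/(γ/2+‖z_i‖²)²`, the operator norms of the
`Δ_i = I − W_i Z_i` are non-increasing and at most `1`, and `γ‖w_i‖² ≤ 4‖z_i‖²/γ`. -/
theorem debias_weight_norm_bounds (d : ℕ) (γ : ℝ) (hγ : 0 < γ)
    (z w : ℕ → Fin d → ℝ)
    (Δ : ℕ → Matrix (Fin d) (Fin d) ℝ)
    (hΔ : ∀ k, Δ k = (1 : Matrix (Fin d) (Fin d) ℝ)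
      - ∑ j ∈ Finset.range k, vecMulVec (w j) (z j))
    (hw : ∀ i, w i = (γ / 2 + z i ⬝ᵥ z i)⁻¹ • (Δ i *ᵥ z i)) :
    (∀ i, w i ⬝ᵥ w i
        ≤ matOpNorm (Δ i) ^ 2 * (z i ⬝ᵥ z i) / (γ / 2 + z i ⬝ᵥ z i) ^ 2)
    ∧ (∀ i, matOpNorm (Δ (i + 1)) ≤ matOpNorm (Δ i))
    ∧ (∀ i, matOpNorm (Δ i) ≤ 1)
    ∧ (∀ i, γ * (w i ⬝ᵥ w i) ≤ 4 * (z i ⬝ᵥ z i) / γ) := by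
  have hzz : ∀ i, 0 ≤ z i ⬝ᵥ z i := fun i => dot_self_nonneg' (z i)
  have hc : ∀ i, 0 < γ / 2 + z i ⬝ᵥ z i := fun i => by have := hzz i; linarith
  -- recursion
  have hrec : ∀ i, Δ (i + 1)
      = Δ i * ((1 : Matrix (Fin d) (Fin d) ℝ)
        - (γ / 2 + z i ⬝ᵥ z i)⁻¹ • vecMulVec (z i) (z i)) := by
    intro i
    have h1 : Δ (i + 1) = Δ i - vecMulVec (w i) (z i) := by
      rw [hΔ (i + 1), hΔ i, Finset.sum_range_succ]
      abel
    rw [h1, hw i, smul_vecMulVec', vecMulVec_mulVec_left, Matrix.mul_sub,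
      Matrix.mul_one, Matrix.mul_smul]
  -- part 2: monotone
  have part2 : ∀ i, matOpNorm (Δ (i + 1)) ≤ matOpNorm (Δ i) := by
    intro i
    calc matOpNorm (Δ (i + 1)) ≤ matOpNorm (Δ i) *
        matOpNorm ((1 : Matrix (Fin d) (Fin d) ℝ)
          - (γ / 2 + z i ⬝ᵥ z i)⁻¹ • vecMulVec (z i) (z i)) := by
          rw [hrec i]; exact matOpNorm_mul_le _ _
      _ ≤ matOpNorm (Δ i) * 1 := by
          apply mul_le_mul_of_nonneg_left _ (norm_nonneg _)
          exact contraction_opNorm_le (z i) _ (hc i) (by linarith [hγ])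
      _ = matOpNorm (Δ i) := mul_one _
  -- part 3
  have part3 : ∀ i, matOpNorm (Δ i) ≤ 1 := by
    intro i
    induction i with
    | zero =>
      have h0 : Δ 0 = 1 := by rw [hΔ 0]; simp
      rw [h0]; exact matOpNorm_one_le
    | succ n ih => exact le_trans (part2 n) ih
  -- part 1
  have part1 : ∀ i, w i ⬝ᵥ w i
      ≤ matOpNorm (Δ i) ^ 2 * (z i ⬝ᵥ z i) / (γ / 2 + z i ⬝ᵥ z i) ^ 2 := by
    intro i
    set c := γ / 2 + z i ⬝ᵥ z i with hcdef
    have hcpos := hc i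
    have hu : (Δ i *ᵥ z i) ⬝ᵥ (Δ i *ᵥ z i) ≤ matOpNorm (Δ i) ^ 2 * (z i ⬝ᵥ z i) :=
      mulVec_dot_le (Δ i) (z i)
    rw [hw i]
    simp only [smul_dotProduct, dotProduct_smul, smul_eq_mul]
    have hre : (γ / 2 + z i ⬝ᵥ z i)⁻¹ *
        ((γ / 2 + z i ⬝ᵥ z i)⁻¹ * ((Δ i *ᵥ z i) ⬝ᵥ (Δ i *ᵥ z i)))
        = ((Δ i *ᵥ z i) ⬝ᵥ (Δ i *ᵥ z i)) / (γ / 2 + z i ⬝ᵥ z i) ^ 2 := by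
      field_simp
    rw [hre]
    exact div_le_div_of_nonneg_right hu (by positivity) |>.trans_eq rfl
  refine ⟨part1, part2, part3, fun i => ?_⟩
  have hcpos := hc i
  have h1 := part1 i
  have h3 := part3 i
  have hN : 0 ≤ matOpNorm (Δ i) := norm_nonneg _
  have hNsq : matOpNorm (Δ i) ^ 2 ≤ 1 := by nlinarith
  have h2 : matOpNorm (Δ i) ^ 2 * (z i ⬝ᵥ z i) / (γ / 2 + z i ⬝ᵥ z i) ^ 2
      ≤ (z i ⬝ᵥ z i) / (γ / 2 + z i ⬝ᵥ z i) ^ 2 := by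
    apply div_le_div_of_nonneg_right ?_ (by positivity) |>.trans_eq rfl
    nlinarith [hzz i]
  have hkey : γ * ((z i ⬝ᵥ z i) / (γ / 2 + z i ⬝ᵥ z i) ^ 2)
      ≤ 4 * (z i ⬝ᵥ z i) / γ := by
    rw [mul_div_assoc', div_le_div_iff₀ (by positivity) hγ]
    nlinarith [hzz i, hγ, mul_le_mul_of_nonneg_right
      (by nlinarith [hzz i, mul_nonneg hγ.le (hzz i), sq_nonneg (z i ⬝ᵥ z i)] : γ ^ 2 ≤ 4 * (γ / 2 + z i ⬝ᵥ z i) ^ 2) (hzz i)]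
  calc γ * (w i ⬝ᵥ w i)
      ≤ γ * (matOpNorm (Δ i) ^ 2 * (z i ⬝ᵥ z i) / (γ / 2 + z i ⬝ᵥ z i) ^ 2) :=
        mul_le_mul_of_nonneg_left h1 hγ.le
    _ ≤ γ * ((z i ⬝ᵥ z i) / (γ / 2 + z i ⬝ᵥ z i) ^ 2) :=
        mul_le_mul_of_nonneg_left h2 hγ.le
    _ ≤ 4 * (z i ⬝ᵥ z i) / γ := hkey
end

section
/- (Commutative case bound) Suppose z₁,…,z_n ∈ ℝ^d and γ > 0, and the rank-one matrices z_i z_iᵀ all commute with each other. With the recursive weights above, ‖I − ∑_{i=1}^n w_i z_iᵀ‖_op ≤ exp( − λ_min(∑_{i=1}^n z_i z_iᵀ)/γ ), where λ_min denotes the minimum eigenvalue. -/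
open Matrix Finset

section AuxLemmas

variable {d : ℕ}

lemma aux_vecMulVec_smul_left (a : ℝ) (u v : Fin d → ℝ) :
    vecMulVec (a • u) v = a • vecMulVec u v := by
  ext i j
  simp [vecMulVec_apply, mul_assoc]

lemma aux_vecMulVec_mulVec_left (M : Matrix (Fin d) (Fin d) ℝ) (u v : Fin d → ℝ) :
    vecMulVec (M *ᵥ u) v = M * vecMulVec u v := by
  ext i j
  simp only [vecMulVec_apply, Matrix.mul_apply, Matrix.mulVec, dotProduct, Finset.sum_mul]
  exact Finset.sum_congr rfl fun k _ => by ring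

lemma aux_vecMulVec_mulVec (u v x : Fin d → ℝ) :
    vecMulVec u v *ᵥ x = (v ⬝ᵥ x) • u := by
  ext i
  simp only [Matrix.mulVec, dotProduct, vecMulVec_apply, Pi.smul_apply, smul_eq_mul,
    Finset.sum_mul]
  exact Finset.sum_congr rfl fun k _ => by ring

lemma aux_toEuclideanLin_mul (X Y : Matrix (Fin d) (Fin d) ℝ) :
    Matrix.toEuclideanLin (X * Y) = Matrix.toEuclideanLin X * Matrix.toEuclideanLin Y := by
  rw [← coe_toEuclideanCLM_eq_toEuclideanLin, ← coe_toEuclideanCLM_eq_toEuclideanLin,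
    ← coe_toEuclideanCLM_eq_toEuclideanLin, _root_.map_mul]
  rfl

lemma aux_inner_eq_dot (a b : EuclideanSpace ℝ (Fin d)) :
    (inner ℝ a b : ℝ) = (fun i => a i) ⬝ᵥ (fun i => b i) := by
  simp [PiLp.inner_apply, dotProduct, mul_comm]

lemma aux_sum_mulVec {α : Type*} (s : Finset α) (F : α → Matrix (Fin d) (Fin d) ℝ)
    (u : Fin d → ℝ) : (∑ i ∈ s, F i) *ᵥ u = ∑ i ∈ s, F i *ᵥ u := by
  induction s using Finset.cons_induction with
  | empty => simp [Matrix.zero_mulVec]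
  | cons a s ha ih => simp [Finset.sum_cons, Matrix.add_mulVec, ih]

lemma aux_dot_sum {α : Type*} (s : Finset α) (v : α → Fin d → ℝ) (u : Fin d → ℝ) :
    u ⬝ᵥ (∑ i ∈ s, v i) = ∑ i ∈ s, u ⬝ᵥ v i := by
  induction s using Finset.cons_induction with
  | empty => simp
  | cons a s ha ih => simp [Finset.sum_cons, dotProduct_add, ih]

end AuxLemmas

set_option maxHeartbeats 1000000 in
/-- commutative case bound: if the rank-one matrices `z_i z_iᵀ` commute
pairwise (and `‖z_i‖² ≤ γ/2`), then with the recursive weights,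
`‖I − ∑ w_i z_iᵀ‖_op ≤ exp(−λ_min(∑ z_i z_iᵀ)/γ)`, where `λ_min` is expressed through
any lower bound `lam` on the Rayleigh quotient of `∑ z_i z_iᵀ`. -/
theorem commutative_operator_norm_bound (d n : ℕ) (γ : ℝ) (hγ : 0 < γ)
    (z w : ℕ → Fin d → ℝ)
    (hcomm : ∀ i j, vecMulVec (z i) (z i) * vecMulVec (z j) (z j)
      = vecMulVec (z j) (z j) * vecMulVec (z i) (z i))
    (hz_small : ∀ i, z i ⬝ᵥ z i ≤ γ / 2)
    (hw : ∀ i, w i = (γ / 2 + z i ⬝ᵥ z i)⁻¹ •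
      (((1 : Matrix (Fin d) (Fin d) ℝ)
        - ∑ j ∈ Finset.range i, vecMulVec (w j) (z j)) *ᵥ z i))
    (lam : ℝ)
    (hlam : ∀ u : Fin d → ℝ,
      lam * (u ⬝ᵥ u) ≤ u ⬝ᵥ ((∑ i ∈ Finset.range n, vecMulVec (z i) (z i)) *ᵥ u)) :
    matOpNorm ((1 : Matrix (Fin d) (Fin d) ℝ)
        - ∑ i ∈ Finset.range n, vecMulVec (w i) (z i))
      ≤ Real.exp (-lam / γ) := by
  classical
  set c : ℕ → ℝ := fun i => (γ / 2 + z i ⬝ᵥ z i)⁻¹ with hc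
  set P : ℕ → Matrix (Fin d) (Fin d) ℝ := fun i => vecMulVec (z i) (z i) with hPdef
  set A : ℕ → Matrix (Fin d) (Fin d) ℝ := fun i => 1 - c i • P i with hAdef
  set L : ℕ → Matrix (Fin d) (Fin d) ℝ := fun k => ((List.range k).map A).prod with hLdef
  have hzz : ∀ i, 0 ≤ z i ⬝ᵥ z i := by
    intro i
    exact Finset.sum_nonneg fun j _ => mul_self_nonneg _
  have hden : ∀ i, 0 < γ / 2 + z i ⬝ᵥ z i := fun i => by
    have := hzz i; linarith
  have hcpos : ∀ i, 0 < c i := fun i => inv_pos.mpr (hden i)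
  have hLsucc : ∀ k, L (k + 1) = L k * A k := by
    intro k
    simp [hLdef, List.range_succ]
  -- Step 1: product form of the matrix
  have key1 : ∀ k, (1 : Matrix (Fin d) (Fin d) ℝ)
      - ∑ i ∈ Finset.range k, vecMulVec (w i) (z i) = L k := by
    intro k
    induction k with
    | zero => simp [hLdef]
    | succ k ih =>
      rw [Finset.sum_range_succ, hLsucc, ← ih, hw k, aux_vecMulVec_smul_left,
        aux_vecMulVec_mulVec_left]
      simp only [hAdef, hPdef]
      rw [Matrix.mul_sub, Matrix.mul_one, Matrix.mul_smul]
      abel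
  -- commutation facts
  have hAcomm : ∀ i j, A i * A j = A j * A i := by
    intro i j
    have h : P i * P j = P j * P i := hcomm i j
    simp only [hAdef, Matrix.sub_mul, Matrix.mul_sub, Matrix.one_mul, Matrix.mul_one,
      Matrix.smul_mul, Matrix.mul_smul, smul_smul, h, smul_sub]
    rw [mul_comm (c j) (c i)]
    abel
  have hALcomm : ∀ m k, A m * L k = L k * A m := by
    intro m k
    induction k with
    | zero => simp [hLdef]
    | succ k ih =>
      rw [hLsucc, ← Matrix.mul_assoc, ih, Matrix.mul_assoc, hAcomm m k, ← Matrix.mul_assoc]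
  -- hermitian facts
  have hPH : ∀ i, (P i)ᴴ = P i := by
    intro i
    ext a b
    simp [hPdef, conjTranspose_apply, vecMulVec_apply, mul_comm]
  have hPT : ∀ i, (P i)ᵀ = P i := by
    intro i
    ext a b
    simp [hPdef, transpose_apply, vecMulVec_apply, mul_comm]
  have hAH : ∀ i, (A i)ᴴ = A i := by
    intro i
    simp [hAdef, conjTranspose_sub, conjTranspose_smul, hPH i, hPT i]
  have hLH : ∀ k, (L k)ᴴ = L k := by
    intro k
    induction k with
    | zero => simp [hLdef]
    | succ k ih =>
      rw [hLsucc, conjTranspose_mul, hAH, ih, hALcomm]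
  -- operator side
  set T : Fin n → (EuclideanSpace ℝ (Fin d) →ₗ[ℝ] EuclideanSpace ℝ (Fin d)) :=
    fun i => Matrix.toEuclideanLin (P i) with hTdef
  have hTsymm : ∀ i, (T i).IsSymmetric := fun i =>
    Matrix.isHermitian_iff_isSymmetric.mp (hPH i)
  have hTcomm : Pairwise (Function.onFun Commute T) := by
    intro i j _
    show T i * T j = T j * T i
    simp only [hTdef]
    rw [← aux_toEuclideanLin_mul, ← aux_toEuclideanLin_mul]
    exact congrArg _ (hcomm i j)
  set Top : EuclideanSpace ℝ (Fin d) →ₗ[ℝ] EuclideanSpace ℝ (Fin d) :=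
    Matrix.toEuclideanLin (L n) with hTopdef
  have hTopsymm : Top.IsSymmetric := Matrix.isHermitian_iff_isSymmetric.mp (hLH n)
  set cexp : ℝ := Real.exp (-lam / γ) with hcexpdef
  have hcexp0 : 0 ≤ cexp := (Real.exp_pos _).le
  -- key eigenvalue bound
  have key : ∀ (μ : ℝ) (v : EuclideanSpace ℝ (Fin d)), v ≠ 0 → Top v = μ • v → |μ| ≤ cexp := by
    intro μ v hv hμ
    have htop := LinearMap.IsSymmetric.iSup_iInf_eq_top_of_commute hTsymm hTcomm
    have hex : ∃ (χ : Fin n → ℝ) (ww : EuclideanSpace ℝ (Fin d)),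
        (∀ i, T i ww = χ i • ww) ∧ (inner ℝ ww v : ℝ) ≠ 0 := by
      by_contra hcon
      push_neg at hcon
      have hv0 : (inner ℝ v v : ℝ) = 0 := by
        have hvtop : v ∈ ⨆ χ : Fin n → ℝ, ⨅ i, Module.End.eigenspace (T i) (χ i) := by
          rw [htop]; trivial
        refine Submodule.iSup_induction (motive := fun x => (inner ℝ x v : ℝ) = 0) _ hvtop
          (fun χ x hx => ?_) (by simp) (fun x y hx hy => ?_)
        · refine hcon χ x fun i => ?_
          have hmem : x ∈ Module.End.eigenspace (T i) (χ i) :=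
            (Submodule.mem_iInf _).mp hx i
          exact Module.End.mem_eigenspace_iff.mp hmem
        · show (inner ℝ (x + y) v : ℝ) = 0
          rw [inner_add_left, hx, hy, add_zero]
      exact hv (inner_self_eq_zero.mp hv0)
    obtain ⟨χ, ww, hww, hwv⟩ := hex
    have hw0 : ww ≠ 0 := by
      intro h
      exact hwv (by simp [h])
    -- coordinates
    set u : Fin d → ℝ := fun i => ww i with hudef
    have hcoord : ∀ i : Fin n, P (i : ℕ) *ᵥ u = χ i • u := by
      intro i
      funext j
      exact congrFun (congrArg (fun (y : EuclideanSpace ℝ (Fin d)) => (fun t => y t)) (hww i)) j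
    have hu0 : u ≠ 0 := by
      intro h
      apply hw0
      ext j
      exact congrFun h j
    have huu : 0 < u ⬝ᵥ u := by
      have h := (Matrix.dotProduct_star_self_pos_iff (v := u)).mpr hu0
      simpa using h
    -- eigenvalue identities and bounds
    have hchi_eq : ∀ i : Fin n, χ i * (u ⬝ᵥ u) = (z (i : ℕ) ⬝ᵥ u) ^ 2 := by
      intro i
      have h1 : u ⬝ᵥ (P (i : ℕ) *ᵥ u) = (z (i : ℕ) ⬝ᵥ u) ^ 2 := by
        show u ⬝ᵥ (vecMulVec (z (i:ℕ)) (z (i:ℕ)) *ᵥ u) = _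
        rw [aux_vecMulVec_mulVec, dotProduct_smul, smul_eq_mul, dotProduct_comm u (z (i:ℕ))]
        ring
      rw [hcoord i, dotProduct_smul, smul_eq_mul] at h1
      exact h1
    have hchi_nonneg : ∀ i : Fin n, 0 ≤ χ i := by
      intro i
      have h := hchi_eq i
      nlinarith [sq_nonneg (z (i : ℕ) ⬝ᵥ u)]
    have hchi_le : ∀ i : Fin n, χ i ≤ z (i : ℕ) ⬝ᵥ z (i : ℕ) := by
      intro i
      have hcs := real_inner_mul_inner_self_le
        ((WithLp.equiv 2 (Fin d → ℝ)).symm (z (i : ℕ))) ww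
      have h1 : (inner ℝ ((WithLp.equiv 2 (Fin d → ℝ)).symm (z (i : ℕ))) ww : ℝ)
          = z (i : ℕ) ⬝ᵥ u := aux_inner_eq_dot _ _
      have h2 : (inner ℝ ((WithLp.equiv 2 (Fin d → ℝ)).symm (z (i : ℕ)))
          ((WithLp.equiv 2 (Fin d → ℝ)).symm (z (i : ℕ))) : ℝ)
          = z (i : ℕ) ⬝ᵥ z (i : ℕ) := aux_inner_eq_dot _ _
      have h3 : (inner ℝ ww ww : ℝ) = u ⬝ᵥ u := aux_inner_eq_dot _ _
      rw [h1, h2, h3] at hcs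
      have h4 := hchi_eq i
      nlinarith
    -- action of the product on ww
    set χ' : ℕ → ℝ := fun i => if h : i < n then χ ⟨i, h⟩ else 0 with hχ'def
    have hLact : ∀ k, k ≤ n →
        Matrix.toEuclideanLin (L k) ww = (∏ i ∈ Finset.range k, (1 - c i * χ' i)) • ww := by
      intro k
      induction k with
      | zero =>
        intro _
        simp only [hLdef, List.range_zero, List.map_nil, List.prod_nil, Finset.range_zero,
          Finset.prod_empty, one_smul]
        rw [← coe_toEuclideanCLM_eq_toEuclideanLin, _root_.map_one]
        rfl
      | succ k ih =>
        intro hk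
        have hk' : k < n := hk
        rw [hLsucc, aux_toEuclideanLin_mul]
        have hAact : Matrix.toEuclideanLin (A k) ww = (1 - c k * χ' k) • ww := by
          simp only [hAdef]
          rw [_root_.map_sub, _root_.map_smul]
          have h1 : Matrix.toEuclideanLin (P k) ww = χ' k • ww := by
            have h := hww ⟨k, hk'⟩
            simp only [hTdef] at h
            rw [h]
            congr 1
            simp [hχ'def, hk']
          have h2 : Matrix.toEuclideanLin (1 : Matrix (Fin d) (Fin d) ℝ) ww = ww := by
            rw [← coe_toEuclideanCLM_eq_toEuclideanLin, _root_.map_one]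
            rfl
          simp only [LinearMap.sub_apply, LinearMap.smul_apply]
          rw [h1, h2, smul_smul, sub_smul, one_smul]
        show Matrix.toEuclideanLin (L k) (Matrix.toEuclideanLin (A k) ww) = _
        rw [hAact, _root_.map_smul, ih (le_of_lt hk'), smul_smul, Finset.prod_range_succ]
        congr 1
        ring
    -- the eigenvalue μχ
    set μχ : ℝ := ∏ i ∈ Finset.range n, (1 - c i * χ' i) with hμχdef
    have hTopww : Top ww = μχ • ww := hLact n le_rfl
    -- μ = μχ
    have hμeq : μ = μχ := by
      have h1 := hTopsymm ww v
      rw [hTopww, hμ, real_inner_smul_left, real_inner_smul_right] at h1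
      exact (mul_right_cancel₀ hwv h1).symm
    -- scalar bounds
    have hterm : ∀ i ∈ Finset.range n, 0 ≤ 1 - c i * χ' i
        ∧ 1 - c i * χ' i ≤ Real.exp (-(χ' i) / γ) := by
      intro i hi
      have hi' : i < n := Finset.mem_range.mp hi
      have hχeq : χ' i = χ ⟨i, hi'⟩ := by simp [hχ'def, hi']
      have h0 : 0 ≤ χ' i := hχeq ▸ hchi_nonneg ⟨i, hi'⟩
      have h1 : χ' i ≤ z i ⬝ᵥ z i := hχeq ▸ hchi_le ⟨i, hi'⟩
      have hcden : c i * (γ / 2 + z i ⬝ᵥ z i) = 1 := inv_mul_cancel₀ (ne_of_gt (hden i))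
      constructor
      · have h2 : c i * χ' i ≤ c i * (γ / 2 + z i ⬝ᵥ z i) := by
          apply mul_le_mul_of_nonneg_left _ (hcpos i).le
          have := hden i
          linarith
        rw [hcden] at h2
        linarith
      · have hinv : γ⁻¹ ≤ c i := by
          rw [hc]
          apply inv_anti₀ (hden i)
          have := hz_small i
          linarith
        have h2 : χ' i / γ ≤ c i * χ' i := by
          rw [div_eq_inv_mul]
          exact mul_le_mul_of_nonneg_right hinv h0
        have h3 : -(χ' i) / γ + 1 ≤ Real.exp (-(χ' i) / γ) := Real.add_one_le_exp _
        have h4 : -(χ' i) / γ = -(χ' i / γ) := by ring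
        linarith
    have hμχ_nonneg : 0 ≤ μχ :=
      Finset.prod_nonneg fun i hi => (hterm i hi).1
    have hμχ_le : μχ ≤ ∏ i ∈ Finset.range n, Real.exp (-(χ' i) / γ) :=
      Finset.prod_le_prod (fun i hi => (hterm i hi).1) (fun i hi => (hterm i hi).2)
    have hexp_prod : ∏ i ∈ Finset.range n, Real.exp (-(χ' i) / γ)
        = Real.exp (∑ i ∈ Finset.range n, -(χ' i) / γ) := (Real.exp_sum _ _).symm
    have hsum_lam : lam ≤ ∑ i ∈ Finset.range n, χ' i := by
      have h1 := hlam u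
      have h2 : u ⬝ᵥ ((∑ i ∈ Finset.range n, P i) *ᵥ u)
          = (∑ i ∈ Finset.range n, χ' i) * (u ⬝ᵥ u) := by
        rw [aux_sum_mulVec, aux_dot_sum, Finset.sum_mul]
        apply Finset.sum_congr rfl
        intro i hi
        have hi' : i < n := Finset.mem_range.mp hi
        have h3 : P i *ᵥ u = χ' i • u := by
          have h4 := hcoord ⟨i, hi'⟩
          rw [h4]
          congr 1
          simp [hχ'def, hi']
        rw [h3, dotProduct_smul, smul_eq_mul]
      rw [h2] at h1
      exact le_of_mul_le_mul_right h1 huu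
    have hfinal : μχ ≤ cexp := by
      calc μχ ≤ ∏ i ∈ Finset.range n, Real.exp (-(χ' i) / γ) := hμχ_le
        _ = Real.exp (∑ i ∈ Finset.range n, -(χ' i) / γ) := hexp_prod
        _ ≤ Real.exp (-lam / γ) := by
            apply Real.exp_le_exp.mpr
            have h5 : ∑ i ∈ Finset.range n, -(χ' i) / γ
                = -(∑ i ∈ Finset.range n, χ' i) / γ := by
              rw [← Finset.sum_neg_distrib, Finset.sum_div]
            rw [h5, div_le_div_iff₀ hγ hγ]
            nlinarith
        _ = cexp := rfl
    rw [hμeq, abs_of_nonneg hμχ_nonneg]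
    exact hfinal
  -- final norm bound
  rw [key1 n]
  show ‖(Matrix.toEuclideanCLM (𝕜 := ℝ) (L n) :
      EuclideanSpace ℝ (Fin d) →L[ℝ] EuclideanSpace ℝ (Fin d))‖ ≤ cexp
  apply ContinuousLinearMap.opNorm_le_bound _ hcexp0
  intro x
  set b := hTopsymm.eigenvectorBasis finrank_euclideanSpace_fin with hbdef
  set μs := hTopsymm.eigenvalues finrank_euclideanSpace_fin with hμsdef
  have hbe : ∀ i, Top (b i) = μs i • b i := fun i => by
    have h := hTopsymm.apply_eigenvectorBasis finrank_euclideanSpace_fin i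
    rw [hbdef, hμsdef]
    exact_mod_cast h
  have hbnz : ∀ i, b i ≠ 0 := fun i => by
    intro h
    have h2 := b.orthonormal.1 i
    rw [h] at h2
    simp at h2
  have hμb : ∀ i, |μs i| ≤ cexp := fun i => key (μs i) (b i) (hbnz i) (hbe i)
  have happ : (Matrix.toEuclideanCLM (𝕜 := ℝ) (L n)) x = Top x := rfl
  rw [happ]
  have hrepr : ∀ i, b.repr (Top x) i = μs i * b.repr x i := by
    intro i
    rw [b.repr_apply_apply, b.repr_apply_apply, ← hTopsymm (b i) x, hbe i,
      real_inner_smul_left]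
  have hnorm1 : ‖Top x‖ = ‖b.repr (Top x)‖ := (b.repr.norm_map (Top x)).symm
  have hnorm2 : ‖x‖ = ‖b.repr x‖ := (b.repr.norm_map x).symm
  have hsq : ‖b.repr (Top x)‖ ^ 2 ≤ (cexp * ‖b.repr x‖) ^ 2 := by
    have e1 : ‖b.repr (Top x)‖ ^ 2 = ∑ i, (b.repr (Top x) i) ^ 2 := by
      rw [EuclideanSpace.norm_eq, Real.sq_sqrt (Finset.sum_nonneg fun i _ => sq_nonneg _)]
      simp [Real.norm_eq_abs, sq_abs]
    have e2 : ‖b.repr x‖ ^ 2 = ∑ i, (b.repr x i) ^ 2 := by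
      rw [EuclideanSpace.norm_eq, Real.sq_sqrt (Finset.sum_nonneg fun i _ => sq_nonneg _)]
      simp [Real.norm_eq_abs, sq_abs]
    rw [e1, mul_pow, e2, Finset.mul_sum]
    apply Finset.sum_le_sum
    intro i _
    rw [hrepr i, mul_pow]
    apply mul_le_mul_of_nonneg_right _ (sq_nonneg _)
    have h := abs_le.mp (hμb i)
    exact sq_le_sq' (by linarith) h.2
  rw [hnorm1, hnorm2]
  nlinarith [norm_nonneg (b.repr (Top x)), mul_nonneg hcexp0 (norm_nonneg (b.repr x))]
end

section
/- (Geometric decay of Frobenius error under sufficient exploration) Let (F_i) be a filtration, z_i ∈ ℝ^d be F_{i−1}-measurable, γ > 0, and define Δ_i = I − ∑_{j≤i} w_j z_jᵀ with the recursive weights w_i = Δ_{i−1} z_i/(γ/2 + ‖z_i‖²). Suppose that almost surely ‖z_i‖² ≤ γ/2 and E[z_i z_iᵀ | F_{i−1}] ⪰ c_i Γ for a fixed positive definite matrix Γ and scalars c_i ≥ 0, and assume z_i = Γ^{-1/2} x_i for suitable x_i. Then E[‖Δ_i‖_F² | F_{i−1}] ≤ (1 − λ_min(E[z_i z_iᵀ|F_{i−1}])/γ)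 ‖Δ_{i−1}‖_F², and in particular E‖Δ_n‖_F² ≤ d · ∏_{i=1}^n (1 − λ_min(E[z_iz_iᵀ|F_{i−1}])/γ) ≤ d exp(−∑_i λ_min(E[z_iz_iᵀ|F_{i−1}])/γ). -/
open MeasureTheory Matrix Finset


lemma coeff_ge {γ t : ℝ} (hγ : 0 < γ) (ht0 : 0 ≤ t) (ht : t ≤ γ/2) :
    γ⁻¹ ≤ 2*(γ/2+t)⁻¹ - ((γ/2+t)⁻¹)^2 * t := by
  have hs : 0 < γ/2 + t := by linarith
  have h1 : 2*(γ/2+t)⁻¹ - ((γ/2+t)⁻¹)^2 * t = (γ+t) / (γ/2+t)^2 := by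
    field_simp; ring
  rw [h1, le_div_iff₀ (by positivity), inv_mul_eq_div, div_le_iff₀ hγ]
  nlinarith

lemma coeff_nonneg {γ t : ℝ} (hγ : 0 < γ) (ht0 : 0 ≤ t) :
    0 ≤ 2*(γ/2+t)⁻¹ - ((γ/2+t)⁻¹)^2 * t := by
  have hs : 0 < γ/2 + t := by linarith
  have h1 : 2*(γ/2+t)⁻¹ - ((γ/2+t)⁻¹)^2 * t = (γ+t) / (γ/2+t)^2 := by
    field_simp; ring
  rw [h1]; positivity

lemma frob_step_eq {d : ℕ} (γ : ℝ) (A : Matrix (Fin d) (Fin d) ℝ) (z : Fin d → ℝ) :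
    ∑ a : Fin d, ∑ b : Fin d,
        ((A - vecMulVec ((γ/2 + z ⬝ᵥ z)⁻¹ • (A *ᵥ z)) z) a b)^2
      = (∑ a : Fin d, ∑ b : Fin d, (A a b)^2)
        - (2*(γ/2 + z ⬝ᵥ z)⁻¹ - ((γ/2 + z ⬝ᵥ z)⁻¹)^2 * (z ⬝ᵥ z))
          * ∑ a : Fin d, (z ⬝ᵥ A a)^2 := by
  set r := (γ/2 + z ⬝ᵥ z)⁻¹ with hr
  have key : ∀ a : Fin d, ∑ b : Fin d, ((A - vecMulVec (r • (A *ᵥ z)) z) a b)^2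
      = (∑ b : Fin d, (A a b)^2) - (2*r - r^2 * (z ⬝ᵥ z)) * (z ⬝ᵥ A a)^2 := by
    intro a
    have hv : (A *ᵥ z) a = z ⬝ᵥ A a := by
      simp [mulVec, dotProduct, mul_comm]
    have h1 : ∀ b : Fin d, ((A - vecMulVec (r • (A *ᵥ z)) z) a b)^2
        = (A a b)^2 - (2*r*(z ⬝ᵥ A a))*(z b * A a b)
          + (r*(z ⬝ᵥ A a))^2*(z b * z b) := by
      intro b
      simp only [Matrix.sub_apply, vecMulVec_apply, Pi.smul_apply, smul_eq_mul, hv]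
      ring
    simp_rw [h1]
    rw [Finset.sum_add_distrib, Finset.sum_sub_distrib, ← Finset.mul_sum, ← Finset.mul_sum]
    have h2 : ∑ b : Fin d, z b * A a b = z ⬝ᵥ A a := rfl
    have h3 : ∑ b : Fin d, z b * z b = z ⬝ᵥ z := rfl
    rw [h2, h3]; ring
  simp_rw [key]
  rw [Finset.sum_sub_distrib, ← Finset.mul_sum]

/-- geometric decay of the Frobenius error under sufficient exploration:
with previsible `z_i`, the recursive weights `w_i = Δ_{i−1} z_i/(γ/2 + ‖z_i‖²)` and
`Δ_i = Δ_{i−1} − w_i z_iᵀ` (`Δ_0 = I`), if a.s. `‖z_i‖² ≤ γ/2` and the conditional second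
moment of `z_i` is bounded below by `λ_i` (a lower bound for
`λ_min(E[z_i z_iᵀ | ℱ_{i−1}])`), then `E[‖Δ_i‖_F² | ℱ_{i−1}] ≤ (1 − λ_i/γ)‖Δ_{i−1}‖_F²`,
and `E‖Δ_n‖_F² ≤ d ∏ᵢ (1 − λ_i/γ) ≤ d exp(−∑ᵢ λ_i/γ)`. -/
theorem frobenius_error_geometric_decay
    {Ω : Type*} {m0 : MeasurableSpace Ω} (μ : Measure Ω) [IsProbabilityMeasure μ]
    (ℱ : Filtration ℕ m0) (d n : ℕ) (γ : ℝ) (hγ : 0 < γ)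
    (z : ℕ → Ω → Fin d → ℝ) (w : ℕ → Ω → Fin d → ℝ)
    (Δ : ℕ → Ω → Matrix (Fin d) (Fin d) ℝ)
    (hz_prev : ∀ i, Measurable[ℱ i] (z (i + 1)))
    (hz_small : ∀ i, ∀ᵐ ω ∂μ, z (i + 1) ω ⬝ᵥ z (i + 1) ω ≤ γ / 2)
    (hΔ0 : ∀ ω, Δ 0 ω = 1)
    (hw : ∀ i ω, w (i + 1) ω
      = (γ / 2 + z (i + 1) ω ⬝ᵥ z (i + 1) ω)⁻¹ • (Δ i ω *ᵥ z (i + 1) ω))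
    (hΔ : ∀ i ω, Δ (i + 1) ω = Δ i ω - vecMulVec (w (i + 1) ω) (z (i + 1) ω))
    (F : ℕ → Ω → ℝ) (hF : ∀ i ω, F i ω = ∑ a : Fin d, ∑ b : Fin d, (Δ i ω a b) ^ 2)
    (hFint : ∀ i, Integrable (F i) μ)
    (lam : ℕ → ℝ) (hlam_nonneg : ∀ i, 0 ≤ lam i) (hlam_le : ∀ i, lam i ≤ γ)
    (hlam : ∀ i, ∀ u : Fin d → ℝ,
      (fun _ => lam (i + 1) * (u ⬝ᵥ u))
        ≤ᵐ[μ] μ[fun ω => (z (i + 1) ω ⬝ᵥ u) ^ 2 | ℱ i]) :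
    (∀ i, μ[F (i + 1) | ℱ i] ≤ᵐ[μ] fun ω => (1 - lam (i + 1) / γ) * F i ω)
    ∧ ∫ ω, F n ω ∂μ ≤ (d : ℝ) * ∏ i ∈ Finset.range n, (1 - lam (i + 1) / γ)
    ∧ ∫ ω, F n ω ∂μ
        ≤ (d : ℝ) * Real.exp (-(∑ i ∈ Finset.range n, lam (i + 1)) / γ) := by
  -- basic pointwise facts
  have ht0 : ∀ i ω, (0:ℝ) ≤ z (i+1) ω ⬝ᵥ z (i+1) ω := by
    intro i ω
    exact Finset.sum_nonneg fun c _ => mul_self_nonneg _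
  -- step equality
  have hstep : ∀ i ω, F (i+1) ω = F i ω
      - (2*(γ/2 + z (i+1) ω ⬝ᵥ z (i+1) ω)⁻¹
          - ((γ/2 + z (i+1) ω ⬝ᵥ z (i+1) ω)⁻¹)^2 * (z (i+1) ω ⬝ᵥ z (i+1) ω))
        * ∑ a : Fin d, (z (i+1) ω ⬝ᵥ Δ i ω a)^2 := by
    intro i ω
    rw [hF, hF, ← frob_step_eq γ (Δ i ω) (z (i+1) ω)]
    rw [hΔ i ω, hw i ω]
  -- F is nonincreasing and bounded by d
  have hG0 : ∀ i ω, (0:ℝ) ≤ ∑ a : Fin d, (z (i+1) ω ⬝ᵥ Δ i ω a)^2 :=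
    fun i ω => Finset.sum_nonneg fun a _ => sq_nonneg _
  have hmono : ∀ i ω, F (i+1) ω ≤ F i ω := by
    intro i ω
    rw [hstep i ω]
    have := coeff_nonneg (t := z (i+1) ω ⬝ᵥ z (i+1) ω) hγ (ht0 i ω)
    nlinarith [hG0 i ω]
  have hF0 : ∀ ω, F 0 ω = (d:ℝ) := by
    intro ω
    rw [hF, ]
    simp [hΔ0, Matrix.one_apply, apply_ite (· ^ (2:ℕ))]
  have hFd : ∀ i ω, F i ω ≤ (d:ℝ) := by
    intro i ω
    induction i with
    | zero => exact (hF0 ω).le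
    | succ k ih => exact (hmono k ω).trans ih
  have hΔsq : ∀ i ω a b, (Δ i ω a b)^2 ≤ (d:ℝ) := by
    intro i ω a b
    refine le_trans ?_ (hFd i ω)
    rw [hF]
    calc (Δ i ω a b)^2 ≤ ∑ b' : Fin d, (Δ i ω a b')^2 :=
          Finset.single_le_sum (f := fun b' => (Δ i ω a b')^2)
            (fun c _ => sq_nonneg _) (Finset.mem_univ b)
      _ ≤ _ := Finset.single_le_sum (f := fun a' => ∑ b' : Fin d, (Δ i ω a' b')^2)
          (fun c _ => Finset.sum_nonneg fun _ _ => sq_nonneg _) (Finset.mem_univ a)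
  -- measurability of Δ entries
  have hΔmeas : ∀ i a b, Measurable[ℱ i] (fun ω => Δ i ω a b) := by
    intro i
    induction i with
    | zero => intro a b; simp only [hΔ0]; exact measurable_const
    | succ k ih =>
      intro a b
      have hzm : ∀ c, Measurable[ℱ k] (fun ω => z (k+1) ω c) :=
        fun c => (measurable_pi_apply c).comp (hz_prev k)
      have hΔm : ∀ a' b', Measurable[ℱ k] (fun ω => Δ k ω a' b') := ih
      have : Measurable[ℱ k] (fun ω => Δ (k+1) ω a b) := by
        simp only [hΔ, hw, Matrix.sub_apply, vecMulVec_apply, Pi.smul_apply, smul_eq_mul,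
          mulVec, dotProduct]
        apply Measurable.sub (hΔm a b)
        apply Measurable.mul
        apply Measurable.mul
        · exact (Measurable.const_add (Finset.measurable_sum _ fun c _ =>
            (hzm c).mul (hzm c)) _).inv
        · exact Finset.measurable_sum _ fun c _ => (hΔm a c).mul (hzm c)
        · exact hzm b
      exact this.mono (ℱ.mono (Nat.le_succ k)) le_rfl
  have hFmeas : ∀ i, Measurable[ℱ i] (F i) := by
    intro i
    have : Measurable[ℱ i] fun ω => ∑ a : Fin d, ∑ b : Fin d, (Δ i ω a b)^2 :=
      Finset.measurable_sum _ fun a _ => Finset.measurable_sum _ fun b _ =>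
        (hΔmeas i a b).pow_const 2
    simpa [← hF] using this
  have hle := ℱ.le
  -- ============ main one-step conditional inequality ============
  have main : ∀ i, μ[F (i+1)|ℱ i] ≤ᵐ[μ] fun ω => (1 - lam (i+1)/γ) * F i ω := by
    intro i
    set Z := z (i+1) with hZdef
    have hzmF : ∀ c, Measurable[ℱ i] (fun ω => Z ω c) :=
      fun c => (measurable_pi_apply c).comp (hz_prev i)
    have hzm : ∀ c, Measurable (fun ω => Z ω c) :=
      fun c => (hzmF c).mono (hle i) le_rfl
    have hsq_le : ∀ ω (a : Fin d), Z ω a * Z ω a ≤ Z ω ⬝ᵥ Z ω := by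
      intro ω a
      exact Finset.single_le_sum (f := fun c => Z ω c * Z ω c)
        (fun c _ => mul_self_nonneg _) (Finset.mem_univ a)
    have hZbd : ∀ᵐ ω ∂μ, ∀ p : Fin d × Fin d, |Z ω p.1 * Z ω p.2| ≤ γ/2 := by
      filter_upwards [hz_small i] with ω hω
      intro p
      rw [abs_mul]
      nlinarith [hsq_le ω p.1, hsq_le ω p.2, abs_nonneg (Z ω p.1), abs_nonneg (Z ω p.2),
        sq_abs (Z ω p.1), sq_abs (Z ω p.2), sq_nonneg (|Z ω p.1| - |Z ω p.2|)]
    have hZint : ∀ p : Fin d × Fin d, Integrable (fun ω => Z ω p.1 * Z ω p.2) μ := by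
      intro p
      refine Integrable.mono' (integrable_const (γ/2))
        (((hzm p.1).mul (hzm p.2)).aestronglyMeasurable) ?_
      filter_upwards [hZbd] with ω hω
      rw [Real.norm_eq_abs]; exact hω p
    set M : Fin d → Fin d → Ω → ℝ := fun a b => μ[fun ω => Z ω a * Z ω b|ℱ i] with hMdef
    -- Fact A : conditional second moment for a fixed vector u
    have factA : ∀ u : Fin d → ℝ,
        μ[fun ω => (Z ω ⬝ᵥ u)^2|ℱ i]
          =ᵐ[μ] fun ω => ∑ p : Fin d × Fin d, u p.1 * u p.2 * M p.1 p.2 ω := by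
      intro u
      have hexp : (fun ω => (Z ω ⬝ᵥ u)^2)
          = ∑ p ∈ (Finset.univ : Finset (Fin d × Fin d)),
              (fun ω => (u p.1 * u p.2) • (Z ω p.1 * Z ω p.2)) := by
        funext ω
        simp only [Finset.sum_apply, smul_eq_mul]
        rw [sq, dotProduct, Finset.sum_mul_sum, Fintype.sum_prod_type]
        exact Finset.sum_congr rfl fun a _ => Finset.sum_congr rfl fun b _ => by ring
      rw [hexp]
      have h1 := condExp_finsetSum (μ := μ) (m := ℱ i)
        (s := (Finset.univ : Finset (Fin d × Fin d)))
        (f := fun p ω => (u p.1 * u p.2) • (Z ω p.1 * Z ω p.2))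
        (fun p _ => ((hZint p).smul (u p.1 * u p.2)))
      have h2 : ∀ᵐ ω ∂μ, ∀ p : Fin d × Fin d,
          (μ[fun ω => (u p.1 * u p.2) • (Z ω p.1 * Z ω p.2)|ℱ i]) ω
            = (u p.1 * u p.2) • M p.1 p.2 ω := by
        rw [ae_all_iff]
        intro p
        have := condExp_smul (μ := μ) (m := ℱ i) (u p.1 * u p.2)
          (fun ω => Z ω p.1 * Z ω p.2)
        filter_upwards [this] with ω hω
        exact hω
      filter_upwards [h1, h2] with ω h1ω h2ω
      rw [h1ω]
      simp only [Finset.sum_apply, smul_eq_mul]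
      exact Finset.sum_congr rfl fun p _ => (h2ω p).trans (smul_eq_mul _ _)
    -- Fact B : a.e. the quadratic form bound holds for ALL vectors simultaneously
    have factB : ∀ᵐ ω ∂μ, ∀ u : Fin d → ℝ,
        lam (i+1) * (u ⬝ᵥ u) ≤ ∑ p : Fin d × Fin d, u p.1 * u p.2 * M p.1 p.2 ω := by
      have hQ : ∀ᵐ ω ∂μ, ∀ q : Fin d → ℚ,
          lam (i+1) * ((fun a => (q a : ℝ)) ⬝ᵥ (fun a => (q a : ℝ)))
            ≤ ∑ p : Fin d × Fin d, (q p.1 : ℝ) * (q p.2 : ℝ) * M p.1 p.2 ω := by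
        rw [ae_all_iff]
        intro q
        filter_upwards [hlam i (fun a => (q a:ℝ)), factA (fun a => (q a:ℝ))] with ω h1 h2
        exact le_of_le_of_eq h1 h2
      filter_upwards [hQ] with ω hω
      intro u
      have hSclosed : IsClosed {v : Fin d → ℝ |
          lam (i+1) * (v ⬝ᵥ v) ≤ ∑ p : Fin d × Fin d, v p.1 * v p.2 * M p.1 p.2 ω} := by
        apply isClosed_le
        · exact continuous_const.mul (continuous_finset_sum _ fun a _ =>
            (continuous_apply a).mul (continuous_apply a))
        · exact continuous_finset_sum _ fun p _ =>
            ((continuous_apply p.1).mul (continuous_apply p.2)).mul continuous_const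
      have hsub : Set.univ.pi (fun _ : Fin d => Set.range ((↑) : ℚ → ℝ))
          ⊆ {v : Fin d → ℝ |
            lam (i+1) * (v ⬝ᵥ v) ≤ ∑ p : Fin d × Fin d, v p.1 * v p.2 * M p.1 p.2 ω} := by
        intro v hv
        choose q hq using fun a => hv a (Set.mem_univ a)
        have hv' : v = fun a => (q a : ℝ) := funext fun a => (hq a).symm
        simp only [Set.mem_setOf_eq, hv']
        exact hω q
      have hdense : Dense (Set.univ.pi (fun _ : Fin d => Set.range ((↑) : ℚ → ℝ))) :=
        dense_pi Set.univ (fun a _ => Rat.denseRange_cast)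
      have := hSclosed.closure_subset_iff.mpr hsub
      rw [hdense.closure_eq] at this
      exact this (Set.mem_univ u)
    -- Fact C : pull-out property for the rows of Δ i
    have hΔprodbd : ∀ ω (a : Fin d) (p : Fin d × Fin d),
        |Δ i ω a p.1 * Δ i ω a p.2| ≤ (d:ℝ) := by
      intro ω a p
      rw [abs_mul]
      nlinarith [hΔsq i ω a p.1, hΔsq i ω a p.2, abs_nonneg (Δ i ω a p.1),
        abs_nonneg (Δ i ω a p.2), sq_abs (Δ i ω a p.1), sq_abs (Δ i ω a p.2),
        sq_nonneg (|Δ i ω a p.1| - |Δ i ω a p.2|)]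
    have hΔm0 : ∀ (a b : Fin d), Measurable (fun ω => Δ i ω a b) :=
      fun a b => (hΔmeas i a b).mono (hle i) le_rfl
    have factC : ∀ (a : Fin d) (p : Fin d × Fin d),
        μ[fun ω => (Δ i ω a p.1 * Δ i ω a p.2) * (Z ω p.1 * Z ω p.2)|ℱ i]
          =ᵐ[μ] fun ω => (Δ i ω a p.1 * Δ i ω a p.2) * M p.1 p.2 ω := by
      intro a p
      have hsm : StronglyMeasurable[ℱ i] (fun ω => Δ i ω a p.1 * Δ i ω a p.2) :=
        ((hΔmeas i a p.1).mul (hΔmeas i a p.2)).stronglyMeasurable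
      have hfg : Integrable (fun ω => (Δ i ω a p.1 * Δ i ω a p.2) * (Z ω p.1 * Z ω p.2)) μ := by
        refine Integrable.mono' (integrable_const ((d:ℝ) * (γ/2)))
          ((((hΔm0 a p.1).mul (hΔm0 a p.2)).mul
            ((hzm p.1).mul (hzm p.2))).aestronglyMeasurable) ?_
        filter_upwards [hZbd] with ω hω
        rw [Real.norm_eq_abs, abs_mul]
        exact mul_le_mul (hΔprodbd ω a p) (hω p) (abs_nonneg _)
          (Nat.cast_nonneg d)
      have := condExp_mul_of_stronglyMeasurable_left hsm hfg (hZint p)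
      filter_upwards [this] with ω hω
      exact hω
    -- the "gain" term G
    set G : Ω → ℝ := fun ω => ∑ a : Fin d, (Z ω ⬝ᵥ Δ i ω a)^2 with hGdef
    have hGexp : G = ∑ q ∈ (Finset.univ : Finset (Fin d × (Fin d × Fin d))),
        (fun ω => (Δ i ω q.1 q.2.1 * Δ i ω q.1 q.2.2) * (Z ω q.2.1 * Z ω q.2.2)) := by
      funext ω
      simp only [Finset.sum_apply, hGdef]
      rw [Fintype.sum_prod_type]
      refine Finset.sum_congr rfl fun a _ => ?_
      rw [sq, dotProduct, Finset.sum_mul_sum, Fintype.sum_prod_type]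
      exact Finset.sum_congr rfl fun c _ => Finset.sum_congr rfl fun b _ => by ring
    have hGint_term : ∀ q : Fin d × (Fin d × Fin d),
        Integrable (fun ω => (Δ i ω q.1 q.2.1 * Δ i ω q.1 q.2.2) * (Z ω q.2.1 * Z ω q.2.2)) μ := by
      intro q
      refine Integrable.mono' (integrable_const ((d:ℝ) * (γ/2)))
        ((((hΔm0 q.1 q.2.1).mul (hΔm0 q.1 q.2.2)).mul
          ((hzm q.2.1).mul (hzm q.2.2))).aestronglyMeasurable) ?_
      filter_upwards [hZbd] with ω hω
      rw [Real.norm_eq_abs, abs_mul]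
      exact mul_le_mul (hΔprodbd ω q.1 q.2) (hω q.2) (abs_nonneg _) (Nat.cast_nonneg d)
    have hG' : G = fun ω => ∑ q : Fin d × (Fin d × Fin d),
        (Δ i ω q.1 q.2.1 * Δ i ω q.1 q.2.2) * (Z ω q.2.1 * Z ω q.2.2) := by
      rw [hGexp]; funext ω; simp [Finset.sum_apply]
    have hGint : Integrable G μ := by
      rw [hG']
      exact integrable_finset_sum _ fun q _ => hGint_term q
    have hGcond : μ[G|ℱ i] =ᵐ[μ] fun ω => ∑ a : Fin d, ∑ p : Fin d × Fin d,
        (Δ i ω a p.1 * Δ i ω a p.2) * M p.1 p.2 ω := by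
      rw [hGexp]
      have h1 := condExp_finsetSum (μ := μ) (m := ℱ i)
        (s := (Finset.univ : Finset (Fin d × (Fin d × Fin d))))
        (f := fun q ω => (Δ i ω q.1 q.2.1 * Δ i ω q.1 q.2.2) * (Z ω q.2.1 * Z ω q.2.2))
        (fun q _ => hGint_term q)
      have h2 : ∀ᵐ ω ∂μ, ∀ q : Fin d × (Fin d × Fin d),
          (μ[fun ω => (Δ i ω q.1 q.2.1 * Δ i ω q.1 q.2.2) * (Z ω q.2.1 * Z ω q.2.2)|ℱ i]) ω
            = (Δ i ω q.1 q.2.1 * Δ i ω q.1 q.2.2) * M q.2.1 q.2.2 ω := by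
        rw [ae_all_iff]
        intro q
        exact factC q.1 q.2
      filter_upwards [h1, h2] with ω h1ω h2ω
      rw [h1ω]
      simp only [Finset.sum_apply]
      rw [Fintype.sum_prod_type]
      exact Finset.sum_congr rfl fun a _ => Finset.sum_congr rfl fun p _ => h2ω (a, p)
    have hGlow : ∀ᵐ ω ∂μ, lam (i+1) * F i ω
        ≤ ∑ a : Fin d, ∑ p : Fin d × Fin d, (Δ i ω a p.1 * Δ i ω a p.2) * M p.1 p.2 ω := by
      filter_upwards [factB] with ω hω
      have key : ∀ a : Fin d, lam (i+1) * (Δ i ω a ⬝ᵥ Δ i ω a)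
          ≤ ∑ p : Fin d × Fin d, Δ i ω a p.1 * Δ i ω a p.2 * M p.1 p.2 ω :=
        fun a => hω (Δ i ω a)
      have hFrow : F i ω = ∑ a : Fin d, (Δ i ω a ⬝ᵥ Δ i ω a) := by
        rw [hF]
        exact Finset.sum_congr rfl fun a _ =>
          Finset.sum_congr rfl fun b _ => sq (Δ i ω a b) ▸ rfl
      rw [hFrow, Finset.mul_sum]
      exact Finset.sum_le_sum fun a _ => key a
    -- pointwise a.e. one-step inequality
    have hpt : ∀ᵐ ω ∂μ, F (i+1) ω ≤ F i ω - γ⁻¹ * G ω := by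
      filter_upwards [hz_small i] with ω hω
      rw [hstep i ω]
      have h1 := coeff_ge (t := Z ω ⬝ᵥ Z ω) hγ (ht0 i ω) hω
      have h2 := mul_le_mul_of_nonneg_right h1 (hG0 i ω)
      simp only [hGdef]
      linarith
    have hsub_int : Integrable (fun ω => F i ω - γ⁻¹ * G ω) μ :=
      (hFint i).sub (hGint.const_mul _)
    have h1 : μ[F (i+1)|ℱ i] ≤ᵐ[μ] μ[fun ω => F i ω - γ⁻¹ * G ω|ℱ i] :=
      condExp_mono (hFint (i+1)) hsub_int hpt
    have h2 : μ[fun ω => F i ω - γ⁻¹ * G ω|ℱ i]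
        =ᵐ[μ] fun ω => F i ω - γ⁻¹ * (μ[G|ℱ i]) ω := by
      have e0 : (fun ω => F i ω - γ⁻¹ * G ω) = F i - γ⁻¹ • G := by
        funext ω; simp [smul_eq_mul]
      rw [e0]
      have e1 := condExp_sub (m := ℱ i) (μ := μ) (hFint i) ((hGint.smul γ⁻¹))
      have e2 := condExp_smul (μ := μ) (m := ℱ i) γ⁻¹ G
      have e3 : μ[F i|ℱ i] = F i :=
        condExp_of_stronglyMeasurable (hle i) (hFmeas i).stronglyMeasurable (hFint i)
      filter_upwards [e1, e2] with ω hω1 hω2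
      rw [hω1]
      simp only [Pi.sub_apply, e3, Pi.smul_apply, smul_eq_mul] at *
      rw [hω2]
    have h3 : (fun ω => F i ω - γ⁻¹ * (μ[G|ℱ i]) ω)
        ≤ᵐ[μ] fun ω => (1 - lam (i+1)/γ) * F i ω := by
      filter_upwards [hGcond, hGlow] with ω hω1 hω2
      have hle' : lam (i+1) * F i ω ≤ (μ[G|ℱ i]) ω := by rw [hω1]; exact hω2
      have hγi : (0:ℝ) ≤ γ⁻¹ := by positivity
      have : F i ω - γ⁻¹ * (μ[G|ℱ i]) ω ≤ F i ω - γ⁻¹ * (lam (i+1) * F i ω) := by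
        nlinarith [mul_le_mul_of_nonneg_left hle' hγi]
      refine this.trans (le_of_eq ?_)
      field_simp
    exact h1.trans (h2.le.trans h3)
  -- ============ parts 2 and 3 ============
  have hfac : ∀ i : ℕ, (0:ℝ) ≤ 1 - lam (i+1)/γ := by
    intro i
    rw [sub_nonneg, div_le_one hγ]
    exact hlam_le (i+1)
  have part2 : ∀ m : ℕ, ∫ ω, F m ω ∂μ ≤ (d : ℝ) * ∏ i ∈ Finset.range m, (1 - lam (i+1)/γ) := by
    intro m
    induction m with
    | zero =>
      simp only [hF0, integral_const, measure_univ, ENNReal.toReal_one, probReal_univ, smul_eq_mul, one_mul,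
        Finset.range_zero, Finset.prod_empty, mul_one, le_refl]
    | succ m ih =>
      have e1 : ∫ ω, F (m+1) ω ∂μ = ∫ ω, (μ[F (m+1)|ℱ m]) ω ∂μ :=
        (integral_condExp (hle m)).symm
      have e2 : ∫ ω, (μ[F (m+1)|ℱ m]) ω ∂μ ≤ ∫ ω, (1 - lam (m+1)/γ) * F m ω ∂μ :=
        integral_mono_ae integrable_condExp ((hFint m).const_mul _) (main m)
      rw [e1]
      refine e2.trans ?_
      rw [integral_const_mul]
      calc (1 - lam (m+1)/γ) * ∫ ω, F m ω ∂μ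
          ≤ (1 - lam (m+1)/γ) * ((d:ℝ) * ∏ i ∈ Finset.range m, (1 - lam (i+1)/γ)) :=
            mul_le_mul_of_nonneg_left ih (hfac m)
        _ = (d:ℝ) * ∏ i ∈ Finset.range (m+1), (1 - lam (i+1)/γ) := by
            rw [Finset.prod_range_succ]; ring
  refine ⟨main, part2 n, (part2 n).trans ?_⟩
  have hprodle : ∏ i ∈ Finset.range n, (1 - lam (i+1)/γ)
      ≤ Real.exp (-(∑ i ∈ Finset.range n, lam (i+1)) / γ) := by
    have : ∏ i ∈ Finset.range n, (1 - lam (i+1)/γ)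
        ≤ ∏ i ∈ Finset.range n, Real.exp (-(lam (i+1)/γ)) := by
      refine Finset.prod_le_prod (fun i _ => hfac i) (fun i _ => ?_)
      linarith [Real.add_one_le_exp (-(lam (i+1)/γ))]
    refine this.trans (le_of_eq ?_)
    rw [← Real.exp_sum]
    congr 1
    simp [neg_div, Finset.sum_div]
  exact mul_le_mul_of_nonneg_left hprodle (Nat.cast_nonneg d)
end
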